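/- arXiv:1108.0273 — 6 statements merged into one kernel-verified Lean document; each statement's English description precedes it below -/
import Mathlib

section
/- For any composition I = (I_1, ..., I_r) of a positive integer N (i.e. integers I_j ≥ 1 with I_1 + ... + I_r = N), define n_I = ∏_{j=1}^{r} C(∑_{k≤j} I_k - 1, I_j - 1) · C(∑_{k≥j} I_k - 1, I_j - 1), where C denotes binomial coefficients. Then n_I = (N-1)!² · ∏_{j=1}^{r} 1/(I_j - 1)!² · ∏_{j=1}^{r-1} 1/((∑_{k=1}^{j} I_k)(∑_{k=j+1}^{r} I_k)). -/
/-! With `S j = I 0 + ⋯ + I (j - 1)`, each prefix binomial satisfies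
`C(S (j+1) - 1, I j - 1) * (I j - 1)! * S j ! = (S (j+1) - 1)!`, so their product telescopes to
`(N - 1)! / (∏ (I j - 1)! * ∏_{1 ≤ j < r} S j)`. The suffix binomials of `I` are the prefix
binomials of the reversed composition, which has the same multiset of parts and whose partial
sums are the suffix sums of `I`. Multiplying the two closed forms gives the formula. -/

open Finset

/-- The coefficient `n_I` associated to a composition `I` (given by its first `r`
entries of the function `I : ℕ → ℕ`). -/
def nC (r : ℕ) (I : ℕ → ℕ) : ℚ :=
  ∏ j ∈ Finset.range r,
    ((((∑ k ∈ Finset.range (j + 1), I k) - 1).choose (I j - 1) : ℚ) *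
      (((∑ k ∈ Finset.Ico j r, I k) - 1).choose (I j - 1) : ℚ))

open Nat

theorem factorial_mul_choose_mul_factorial_pred (a : ℕ) {b : ℕ} (hb : 1 ≤ b) :
    a ! * (a + b - 1).choose (b - 1) * (b - 1)! = (a + b - 1)! := by
  rw [Nat.add_sub_assoc hb, mul_comm (a !), Nat.add_choose_mul_factorial_mul_factorial]

theorem prod_choose_prefix_sum_mul (I : ℕ → ℕ) (r : ℕ) (hI : ∀ j < r, 1 ≤ I j) :
    (∏ j ∈ range r, ((∑ k ∈ range (j + 1), I k) - 1).choose (I j - 1)) *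
        (∏ j ∈ range r, (I j - 1)!) * ∏ j ∈ range (r - 1), ∑ k ∈ range (j + 1), I k =
      ((∑ k ∈ range r, I k) - 1)! := by
  induction r with
  | zero => simp
  | succ r ih =>
    rcases r with _ | r
    · simp
    have hs : ∑ k ∈ range (r + 1), I k ≠ 0 :=
      (Nat.lt_of_lt_of_le (hI 0 (by omega))
        (single_le_sum (fun _ _ => Nat.zero_le _) (mem_range.2 (by omega)))).ne'
    simp only [Nat.add_sub_cancel] at ih ⊢
    rw [prod_range_succ _ (r + 1), prod_range_succ _ (r + 1),
      prod_range_succ (fun j => ∑ k ∈ range (j + 1), I k) r, sum_range_succ _ (r + 1),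
      ← factorial_mul_choose_mul_factorial_pred _ (hI (r + 1) (by omega)),
      ← Nat.mul_factorial_pred hs, ← ih fun j hj => hI j (by omega)]
    ring

theorem sum_Ico_eq_sum_range_reflect {M : Type*} [AddCommMonoid M] (f : ℕ → M) {j r : ℕ}
    (hj : j ≤ r) : ∑ k ∈ Ico j r, f k = ∑ k ∈ range (r - j), f (r - 1 - k) := by
  rcases r with _ | r
  · simp
  rw [range_eq_Ico, sum_Ico_reflect f 0 (by omega)]
  congr 2
  omega

theorem prod_choose_suffix_sum_mul (I : ℕ → ℕ) (r : ℕ) (hI : ∀ j < r, 1 ≤ I j) :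
    (∏ j ∈ range r, ((∑ k ∈ Ico j r, I k) - 1).choose (I j - 1)) *
        (∏ j ∈ range r, (I j - 1)!) * ∏ j ∈ range (r - 1), ∑ k ∈ Ico (j + 1) r, I k =
      ((∑ k ∈ range r, I k) - 1)! := by
  set J := fun k => I (r - 1 - k)
  have hchoose : ∏ j ∈ range r, ((∑ k ∈ Ico j r, I k) - 1).choose (I j - 1) =
      ∏ j ∈ range r, ((∑ k ∈ range (j + 1), J k) - 1).choose (J j - 1) := by
    rw [← prod_range_reflect]
    refine prod_congr rfl fun j hj => ?_
    have hj := mem_range.1 hj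
    rw [sum_Ico_eq_sum_range_reflect _ (by omega), show r - (r - 1 - j) = j + 1 by omega]
  have hfactorial : ∏ j ∈ range r, (I j - 1)! = ∏ j ∈ range r, (J j - 1)! :=
    (prod_range_reflect (fun j => (I j - 1)!) r).symm
  have hsuffix : ∏ j ∈ range (r - 1), ∑ k ∈ Ico (j + 1) r, I k =
      ∏ j ∈ range (r - 1), ∑ k ∈ range (j + 1), J k := by
    rw [← prod_range_reflect]
    refine prod_congr rfl fun j hj => ?_
    have hj := mem_range.1 hj
    rw [sum_Ico_eq_sum_range_reflect _ (by omega), show r - (r - 1 - 1 - j + 1) = j + 1 by omega]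
  rw [hchoose, hfactorial, hsuffix, prod_choose_prefix_sum_mul J r fun j hj => hI _ (by omega),
    sum_range_reflect I r]

theorem nC_eq_general (r N : ℕ) (I : ℕ → ℕ) (hI : ∀ j < r, 1 ≤ I j)
    (hN : N = ∑ j ∈ Finset.range r, I j) :
    nC r I =
      (((N - 1).factorial : ℚ)) ^ 2 *
        (∏ j ∈ Finset.range r, (1 / (((I j - 1).factorial : ℚ)) ^ 2)) *
        ∏ j ∈ Finset.range (r - 1),
          (1 / (((∑ k ∈ Finset.range (j + 1), I k : ℕ) : ℚ) *
            ((∑ k ∈ Finset.Ico (j + 1) r, I k : ℕ) : ℚ))) := by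
  subst hN
  have hprefix := congrArg (Nat.cast (R := ℚ)) (prod_choose_prefix_sum_mul I r hI)
  have hsuffix := congrArg (Nat.cast (R := ℚ)) (prod_choose_suffix_sum_mul I r hI)
  simp only [Nat.cast_mul, Nat.cast_prod] at hprefix hsuffix
  have hne : (((∑ j ∈ range r, I j) - 1)! : ℚ) ≠ 0 := by positivity
  have hP := right_ne_zero_of_mul (hprefix.trans_ne hne)
  have hT := right_ne_zero_of_mul (hsuffix.trans_ne hne)
  simp only [nC, prod_mul_distrib, one_div, prod_inv_distrib, prod_pow]
  nth_rw 1 [sq, ← hprefix]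
  rw [← hsuffix]
  field_simp

/-- the closed formula for `n_I` with reduced fractions. -/
theorem nC_eq (r N : ℕ) (hr : 1 ≤ r) (I : ℕ → ℕ) (hI : ∀ j < r, 1 ≤ I j)
    (hN : N = ∑ j ∈ Finset.range r, I j) :
    nC r I =
      (((N - 1).factorial : ℚ)) ^ 2 *
        (∏ j ∈ Finset.range r, (1 / (((I j - 1).factorial : ℚ)) ^ 2)) *
        ∏ j ∈ Finset.range (r - 1),
          (1 / (((∑ k ∈ Finset.range (j + 1), I k : ℕ) : ℚ) *
            ((∑ k ∈ Finset.Ico (j + 1) r, I k : ℕ) : ℚ))) :=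
  nC_eq_general r N I hI hN
end

section
/- For every s > 1 and positive integers K_1, ..., K_s, and for indeterminates (or arbitrary rational values) X and Y, the following identity holds: ∑_{A ⊆ [s-1]} (-1)^{|A|} (K_1+...+K_{a_1})(K_{a_1+1}+...+K_{a_2}) ··· (K_{a_ℓ+1}+...+K_s + X) · [∏_{a∈A} (K_a + K_{a+1} + Y·χ(a = s-1))] / [∏_{a∈A} (K_1+...+K_a)(K_{a+1}+...+K_s)] = -(X(K_1+...+K_{s-1}) + Y(K_s + X))/(K_2+...+K_s), where A = {a_1 < a_2 < ... < a_ℓ} runs over all subsets of {1,...,s-1} (including the empty set), and χ(S) = 1 if S is true and 0 otherwise. -/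
open Finset

/-!
Merge the last two parts `K (s-2)`, `K (s-1)` into one and split the subsets `A` according
to whether they contain the last cut `s - 2`. Without that cut, the sum is the sum for the
`s - 1` merged parts with `Y` replaced by `-K (s-1)`, which cancels the surplus `K (s-1)` in
the cut factor at `s - 3`. With it, the last block `K (s-1) + X` and the cut factor at
`s - 2` split off, and what remains is the sum for the merged parts with `X = Y = -K (s-1)`.
Induction on `s` then reduces the identity to an identity of rational functions.
-/

/-- For a finite set `A` of cut positions (0-indexed) and a position `e`, the start of
the block ending at `e`: one more than the largest cut below `e`, or `0` if none. -/
def blockStart (A : Finset ℕ) (e : ℕ) : ℕ :=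
  if h : (A.filter (· < e)).Nonempty then (A.filter (· < e)).max' h + 1 else 0

section Merge

variable {M : Type*} [AddCommMonoid M]

def mergeAdjacent (K : ℕ → M) (m : ℕ) : ℕ → M :=
  Function.update K m (K m + K (m + 1))

theorem sum_Ico_mergeAdjacent_of_le (K : ℕ → M) {m b e : ℕ} (he : e ≤ m) :
    ∑ k ∈ Ico b e, mergeAdjacent K m k = ∑ k ∈ Ico b e, K k :=
  sum_congr rfl fun k hk => Function.update_of_ne (by grind) _ _

theorem sum_range_mergeAdjacent_of_le (K : ℕ → M) {m e : ℕ} (he : e ≤ m) :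
    ∑ k ∈ range e, mergeAdjacent K m k = ∑ k ∈ range e, K k := by
  simpa only [range_eq_Ico] using sum_Ico_mergeAdjacent_of_le K he

theorem sum_Ico_mergeAdjacent_succ (K : ℕ → M) {m b : ℕ} (hb : b ≤ m) :
    ∑ k ∈ Ico b (m + 1), mergeAdjacent K m k = ∑ k ∈ Ico b (m + 2), K k := by
  rw [sum_Ico_succ_top hb, sum_Ico_mergeAdjacent_of_le K le_rfl, sum_Ico_succ_top (by omega),
    sum_Ico_succ_top hb, mergeAdjacent, Function.update_self, add_assoc]

end Merge

theorem mergeAdjacent_pos {K : ℕ → ℕ} {m : ℕ} (hK : ∀ j < m + 2, 0 < K j) :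
    ∀ j < m + 1, 0 < mergeAdjacent K m j := by
  intro j hj
  rcases eq_or_ne j m with rfl | hjm
  · simpa [mergeAdjacent] using Or.inl (hK j (by omega))
  · rw [mergeAdjacent, Function.update_of_ne hjm]
    exact hK j (by omega)

theorem blockStart_le_self (A : Finset ℕ) (e : ℕ) : blockStart A e ≤ e := by
  unfold blockStart
  split_ifs with h
  · exact (mem_filter.mp (max'_mem _ h)).2
  · exact Nat.zero_le e

theorem blockStart_succ_of_notMem {A : Finset ℕ} {e : ℕ} (he : e ∉ A) :
    blockStart A (e + 1) = blockStart A e := by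
  have : A.filter (· < e + 1) = A.filter (· < e) :=
    filter_congr fun a ha => by grind
  simp only [blockStart, this]

theorem blockStart_succ_of_mem {A : Finset ℕ} {e : ℕ} (he : e ∈ A) :
    blockStart A (e + 1) = e + 1 := by
  have hmem : e ∈ A.filter (· < e + 1) := mem_filter.mpr ⟨he, e.lt_succ_self⟩
  rw [blockStart, dif_pos ⟨e, hmem⟩]
  congr 1
  exact le_antisymm (max'_le _ _ _ fun a ha => Nat.le_of_lt_succ (mem_filter.mp ha).2)
    (le_max' _ _ hmem)

theorem blockStart_insert_of_le (A : Finset ℕ) {m e : ℕ} (he : e ≤ m) :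
    blockStart (insert m A) e = blockStart A e := by
  have : (insert m A).filter (· < e) = A.filter (· < e) := by
    rw [filter_insert, if_neg (by omega)]
  simp only [blockStart, this]

def blockProd (s : ℕ) (K : ℕ → ℕ) (X : ℚ) (A : Finset ℕ) : ℚ :=
  ∏ e ∈ insert (s - 1) A,
    (if e = s - 1 then ((∑ k ∈ Ico (blockStart A e) s, K k : ℕ) : ℚ) + X
      else ((∑ k ∈ Ico (blockStart A e) (e + 1), K k : ℕ) : ℚ))

def cutProd (s : ℕ) (K : ℕ → ℕ) (Y : ℚ) (A : Finset ℕ) : ℚ :=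
  ∏ a ∈ A,
    (((K a + K (a + 1) : ℕ) : ℚ) + (if a = s - 2 then Y else 0)) /
      (((∑ k ∈ range (a + 1), K k : ℕ) : ℚ) * ((∑ k ∈ Ico (a + 1) s, K k : ℕ) : ℚ))

def krattenthalerSum (s : ℕ) (K : ℕ → ℕ) (X Y : ℚ) : ℚ :=
  ∑ A ∈ (range (s - 1)).powerset, (-1 : ℚ) ^ A.card * blockProd s K X A * cutProd s K Y A

def blockSum (K : ℕ → ℕ) (A : Finset ℕ) (e : ℕ) : ℕ :=
  ∑ k ∈ Ico (blockStart A e) (e + 1), K k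

section

variable {K : ℕ → ℕ} {A : Finset ℕ} {m : ℕ}

theorem blockSum_mergeAdjacent_of_lt {e : ℕ} (he : e < m) :
    blockSum (mergeAdjacent K m) A e = blockSum K A e :=
  sum_Ico_mergeAdjacent_of_le K he

theorem blockSum_mergeAdjacent_self :
    blockSum (mergeAdjacent K m) A m = blockSum K A m + K (m + 1) := by
  rw [blockSum, sum_Ico_mergeAdjacent_succ K (blockStart_le_self A m),
    sum_Ico_succ_top (by have := blockStart_le_self A m; omega), blockSum]

theorem blockSum_insert_of_le {e : ℕ} (he : e ≤ m) :
    blockSum K (insert m A) e = blockSum K A e := by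
  rw [blockSum, blockSum, blockStart_insert_of_le A he]

theorem blockSum_succ_of_notMem {e : ℕ} (he : e ∉ A) :
    blockSum K A (e + 1) = blockSum K A e + K (e + 1) := by
  rw [blockSum, blockStart_succ_of_notMem he,
    sum_Ico_succ_top (by have := blockStart_le_self A e; omega), blockSum]

theorem blockSum_succ_of_mem {e : ℕ} (he : e ∈ A) : blockSum K A (e + 1) = K (e + 1) := by
  rw [blockSum, blockStart_succ_of_mem he, Nat.Ico_succ_singleton, sum_singleton]

theorem blockProd_eq_mul_prod (X : ℚ) (hA : ∀ a ∈ A, a < m) :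
    blockProd (m + 1) K X A = ((blockSum K A m : ℚ) + X) * ∏ e ∈ A, (blockSum K A e : ℚ) := by
  rw [blockProd, Nat.add_sub_cancel, prod_insert fun h => (hA m h).false, if_pos rfl]
  exact congrArg _ (prod_congr rfl fun e he => if_neg (hA e he).ne)

theorem blockProd_mergeAdjacent (X : ℚ) (hA : ∀ a ∈ A, a < m) :
    blockProd (m + 2) K X A = blockProd (m + 1) (mergeAdjacent K m) X A := by
  have hA' : ∀ a ∈ A, a < m + 1 := fun a ha => (hA a ha).trans m.lt_succ_self
  rw [blockProd_eq_mul_prod X hA', blockProd_eq_mul_prod X hA,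
    blockSum_succ_of_notMem fun h => (hA m h).false, blockSum_mergeAdjacent_self]
  exact congrArg _ (prod_congr rfl fun e he => by rw [blockSum_mergeAdjacent_of_lt (hA e he)])

theorem blockProd_insert_mergeAdjacent (X : ℚ) (hA : ∀ a ∈ A, a < m) :
    blockProd (m + 2) K X (insert m A) =
      ((K (m + 1) : ℚ) + X) * blockProd (m + 1) (mergeAdjacent K m) (-K (m + 1)) A := by
  have hA' : ∀ a ∈ insert m A, a < m + 1 := fun a ha => Nat.lt_succ_of_le <| by
    rcases mem_insert.mp ha with rfl | ha
    exacts [le_rfl, (hA a ha).le]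
  have hprod : ∏ e ∈ A, (blockSum K (insert m A) e : ℚ) =
      ∏ e ∈ A, (blockSum (mergeAdjacent K m) A e : ℚ) := prod_congr rfl fun e he => by
    rw [blockSum_insert_of_le (hA e he).le, blockSum_mergeAdjacent_of_lt (hA e he)]
  rw [blockProd_eq_mul_prod X hA', blockProd_eq_mul_prod _ hA,
    prod_insert fun h => (hA m h).false, hprod, blockSum_succ_of_mem (mem_insert_self m A),
    blockSum_insert_of_le le_rfl, blockSum_mergeAdjacent_self]
  push_cast
  ring

theorem cutProd_mergeAdjacent (Y : ℚ) (hA : ∀ a ∈ A, a < m) :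
    cutProd (m + 2) K Y A = cutProd (m + 1) (mergeAdjacent K m) (-K (m + 1)) A := by
  refine prod_congr rfl fun a ha => ?_
  have ham := hA a ha
  rw [sum_range_mergeAdjacent_of_le K ham, sum_Ico_mergeAdjacent_succ K ham,
    if_neg (show a ≠ m + 2 - 2 by omega), mergeAdjacent, Function.update_of_ne ham.ne]
  by_cases h : a + 1 = m
  · subst h
    rw [if_pos (by omega), Function.update_self]
    push_cast
    ring
  · rw [if_neg (by omega), Function.update_of_ne h]

end

theorem krattenthalerSum_succ_succ (m : ℕ) (K : ℕ → ℕ) (X Y : ℚ) :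
    krattenthalerSum (m + 2) K X Y =
      krattenthalerSum (m + 1) (mergeAdjacent K m) X (-K (m + 1)) -
        ((K m + K (m + 1) + Y) * (K (m + 1) + X) / ((∑ k ∈ range (m + 1), K k : ℕ) * K (m + 1))) *
          krattenthalerSum (m + 1) (mergeAdjacent K m) (-K (m + 1)) (-K (m + 1)) := by
  rw [krattenthalerSum, krattenthalerSum, krattenthalerSum, Nat.add_sub_cancel,
    show m + 2 - 1 = m + 1 from rfl, range_add_one, sum_powerset_insert notMem_range_self,
    ← range_add_one, sub_eq_add_neg, mul_sum, ← sum_neg_distrib]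
  congr 1 <;> refine sum_congr rfl fun A hA => ?_ <;>
    have hA : ∀ a ∈ A, a < m := fun a ha => mem_range.mp (mem_powerset.mp hA ha)
  · rw [blockProd_mergeAdjacent X hA, cutProd_mergeAdjacent Y hA]
  · rw [blockProd_insert_mergeAdjacent X hA, cutProd, prod_insert fun h => (hA m h).false,
      ← cutProd, cutProd_mergeAdjacent Y hA, card_insert_of_notMem fun h => (hA m h).false,
      if_pos (Nat.add_sub_cancel m 2).symm, Nat.Ico_succ_singleton, sum_singleton]
    push_cast
    ring

theorem krattenthalerSum_one (K : ℕ → ℕ) (X Y : ℚ) : krattenthalerSum 1 K X Y = K 0 + X := by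
  have hblock : blockSum K ∅ 0 = K 0 := by
    rw [blockSum, Nat.eq_zero_of_le_zero (blockStart_le_self ∅ 0), Nat.Ico_succ_singleton,
      sum_singleton]
  simp [krattenthalerSum, cutProd, blockProd_eq_mul_prod X (A := ∅) (m := 0) (by simp), hblock]

theorem krattenthalerSum_add_two (m : ℕ) {K : ℕ → ℕ} (hK : ∀ j < m + 2, 0 < K j) (X Y : ℚ) :
    krattenthalerSum (m + 2) K X Y =
      -(X * ((∑ k ∈ range (m + 1), K k : ℕ) : ℚ) + Y * (((K (m + 1) : ℕ) : ℚ) + X)) /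
        ((∑ k ∈ Ico 1 (m + 2), K k : ℕ) : ℚ) := by
  have hKq : ∀ j < m + 2, (0 : ℚ) < K j := fun j hj => Nat.cast_pos.mpr (hK j hj)
  induction m generalizing K X Y with
  | zero =>
    have h0 := hKq 0 (by omega)
    have h1 := hKq 1 (by omega)
    rw [krattenthalerSum_succ_succ, krattenthalerSum_one, krattenthalerSum_one, mergeAdjacent,
      Function.update_self]
    simp only [zero_add, Nat.Ico_succ_singleton, sum_singleton, sum_range_one]
    push_cast
    field_simp
    ring
  | succ m ih =>
    have hK' := mergeAdjacent_pos hK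
    have hKq' : ∀ j < m + 2, (0 : ℚ) < mergeAdjacent K (m + 1) j :=
      fun j hj => Nat.cast_pos.mpr (hK' j hj)
    have hS : (0 : ℚ) < ∑ k ∈ Ico 1 (m + 3), (K k : ℚ) :=
      sum_pos (fun k hk => hKq k (mem_Ico.mp hk).2) ⟨1, by simp⟩
    have hT : (0 : ℚ) < ∑ k ∈ range (m + 1), (K k : ℚ) :=
      sum_pos (fun k hk => hKq k (by simp at hk; omega)) ⟨0, by simp⟩
    have h1 := hKq (m + 1) (by omega)
    have h2 := hKq (m + 2) (by omega)
    rw [krattenthalerSum_succ_succ, ih hK' _ _ hKq', ih hK' _ _ hKq',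
      sum_range_mergeAdjacent_of_le K le_rfl, sum_Ico_mergeAdjacent_succ K (by omega),
      mergeAdjacent, Function.update_self, sum_range_succ _ (m + 1)]
    push_cast
    field_simp
    ring

/-- Krattenthaler's lemma: for `s > 1`, positive integers `K_1, …, K_s`
(0-indexed here as `K 0, …, K (s-1)`) and rationals `X`, `Y`,
the alternating sum over all subsets `A` of the cut positions `{0, …, s-2}` of the
block products equals `-(X(K_1+⋯+K_{s-1}) + Y(K_s+X))/(K_2+⋯+K_s)`. -/
theorem krattenthaler_lemma (s : ℕ) (hs : 1 < s) (K : ℕ → ℕ) (hK : ∀ j < s, 1 ≤ K j)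
    (X Y : ℚ) :
    (∑ A ∈ (Finset.range (s - 1)).powerset,
      (-1 : ℚ) ^ A.card *
        (∏ e ∈ insert (s - 1) A,
          (if e = s - 1 then ((∑ k ∈ Finset.Ico (blockStart A e) s, K k : ℕ) : ℚ) + X
            else ((∑ k ∈ Finset.Ico (blockStart A e) (e + 1), K k : ℕ) : ℚ))) *
        (∏ a ∈ A,
          (((K a + K (a + 1) : ℕ) : ℚ) + (if a = s - 2 then Y else 0)) /
            (((∑ k ∈ Finset.range (a + 1), K k : ℕ) : ℚ) *
              ((∑ k ∈ Finset.Ico (a + 1) s, K k : ℕ) : ℚ))))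
    = -(X * ((∑ k ∈ Finset.range (s - 1), K k : ℕ) : ℚ) + Y * (((K (s - 1) : ℕ) : ℚ) + X)) /
        ((∑ k ∈ Finset.Ico 1 s, K k : ℕ) : ℚ) := by
  obtain ⟨m, rfl⟩ : ∃ m, s = m + 2 := ⟨s - 2, by omega⟩
  exact krattenthalerSum_add_two m hK X Y
end

section
/- For any composition I = (I_1, ..., I_r) of N with r ≥ 1, the identity (I_2+···+I_r)(I_1+I_2) + (I_3+···+I_r)(I_2+I_3) + ··· + I_r(I_{r-1}+I_r) = (I_1+···+I_r)(I_2+···+I_r) holds; consequently, with m_I as defined by m_I = -(-1)^r N!(N-1)! ∏_j 1/(I_j!(I_j-1)!) · ∏_{j=1}^{r-1} 1/(I_j+I_{j+1}), one has -(N-I_1) m_I = ∑_{k=1}^{r-1} C(N-1, I_1+···+I_k)² (I_1+···+I_k) · m_{(I_1,...,I_k)} · m_{(I_{k+1},...,I_r)}. -/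
open Finset

/-
Cutting a composition `I` after its `k`-th part into pieces of sizes `A` and `B = N - A`,
the product `m_{(I_1..I_k)} m_{(I_{k+1}..I_r)}` contains every factor of `m_I` except the link
`1/(I_k + I_{k+1})`, with `A!(A-1)! B!(B-1)!` in place of `N!(N-1)!`. The identity
`C(N-1,A)^2 A A!(A-1)! B!(B-1)! N = B N!(N-1)!` then turns the `k`-th summand into
`-(B (I_k + I_{k+1}) / N) m_I`, and the partial-sum identity, summing `B (I_k + I_{k+1})` to
`N (N - I_1)`, adds these up to `-(N - I_1) m_I`.
-/

/-- The coefficient `m_I` associated to a composition `I`. -/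
def mC (r : ℕ) (I : ℕ → ℕ) : ℚ :=
  -(-1 : ℚ) ^ r * ((∑ j ∈ Finset.range r, I j).factorial : ℚ) *
      (((∑ j ∈ Finset.range r, I j) - 1).factorial : ℚ) *
    (∏ j ∈ Finset.range r, (1 / (((I j).factorial * (I j - 1).factorial : ℕ) : ℚ))) *
    ∏ j ∈ Finset.range (r - 1), (1 / ((I j + I (j + 1) : ℕ) : ℚ))

open Nat

namespace Finset

@[to_additive]
theorem prod_range_add_shift {M : Type*} [CommMonoid M] (f : ℕ → M) (a b : ℕ) :
    ∏ i ∈ range (a + b), f i = (∏ i ∈ range a, f i) * ∏ i ∈ range b, f (i + a) := by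
  rw [prod_range_add]
  exact congrArg _ (prod_congr rfl fun i _ => by rw [add_comm])

theorem sum_range_sum_Ico_mul_add_succ {R : Type*} [CommSemiring R] (f : ℕ → R) (m : ℕ) :
    ∑ k ∈ range m, (∑ i ∈ Ico (k + 1) (m + 1), f i) * (f k + f (k + 1))
      = (∑ i ∈ range (m + 1), f i) * ∑ i ∈ Ico 1 (m + 1), f i := by
  induction m with
  | zero => simp
  | succ m ih =>
    have hextend : ∀ k ∈ range (m + 1), (∑ i ∈ Ico (k + 1) (m + 2), f i) * (f k + f (k + 1))
        = (∑ i ∈ Ico (k + 1) (m + 1), f i) * (f k + f (k + 1))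
          + f (m + 1) * (f k + f (k + 1)) :=
      fun k hk => by rw [sum_Ico_succ_top (by simp at hk; omega)]; ring
    have hshift : ∑ k ∈ range (m + 1), f (k + 1) = ∑ i ∈ Ico 1 (m + 2), f i := by
      rw [sum_Ico_eq_sum_range]; simp [add_comm]
    rw [sum_congr rfl hextend, sum_add_distrib, ← mul_sum, sum_add_distrib, hshift,
      sum_range_succ, ih, Ico_self, sum_empty,
      sum_Ico_succ_top (show 1 ≤ m + 1 by omega), sum_range_succ (n := m + 1)]
    ring

end Finset

def factorialWeight (n : ℕ) : ℕ := n ! * (n - 1)!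

theorem factorialWeight_pos (n : ℕ) : 0 < factorialWeight n := by
  unfold factorialWeight; positivity

theorem choose_sq_mul_factorialWeight (A B : ℕ) (hA : 0 < A) :
    (A + B - 1).choose A ^ 2 * A * factorialWeight A * factorialWeight B * (A + B)
      = B * factorialWeight (A + B) := by
  unfold factorialWeight
  rcases B with _ | B
  · simp [Nat.choose_eq_zero_of_lt (show A - 1 < A by omega)]
  have hc := Nat.choose_mul_factorial_mul_factorial (show A ≤ A + (B + 1) - 1 by omega)
  rw [show A + (B + 1) - 1 - A = B by omega] at hc
  have hA' : A * (A - 1)! = A ! := Nat.mul_factorial_pred hA.ne'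
  have hN : (A + (B + 1)) * (A + (B + 1) - 1)! = (A + (B + 1))! :=
    Nat.mul_factorial_pred (by omega)
  rw [← hN, ← hc, ← hA', Nat.factorial_succ]
  simp only [Nat.add_sub_cancel]
  ring

theorem mC_mul_mC_shift (a b : ℕ) (I : ℕ → ℕ) (h : I a + I (a + 1) ≠ 0) :
    mC (a + 1) I * mC (b + 1) (fun i => I (i + (a + 1))) *
        factorialWeight (∑ i ∈ range (a + 1 + (b + 1)), I i)
      = -(I a + I (a + 1) : ℚ) * factorialWeight (∑ i ∈ range (a + 1), I i) *
          factorialWeight (∑ i ∈ range (b + 1), I (i + (a + 1))) * mC (a + 1 + (b + 1)) I := by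
  have hpairs : ∏ j ∈ range (a + 1 + (b + 1) - 1), (1 / ((I j + I (j + 1) : ℕ) : ℚ))
      = (∏ j ∈ range a, (1 / ((I j + I (j + 1) : ℕ) : ℚ))) *
        (1 / ((I a + I (a + 1) : ℕ) : ℚ)) *
        ∏ j ∈ range b, (1 / ((I (j + (a + 1)) + I (j + 1 + (a + 1)) : ℕ) : ℚ)) := by
    rw [show a + 1 + (b + 1) - 1 = a + 1 + b by omega, prod_range_add_shift, prod_range_succ]
    simp only [add_right_comm _ 1 (a + 1)]
  have h' : (I a + I (a + 1) : ℚ) ≠ 0 := by exact_mod_cast h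
  rw [mC, mC, mC, sum_range_add_shift _ (a + 1), prod_range_add_shift _ (a + 1), hpairs, pow_add]
  simp only [factorialWeight, add_tsub_cancel_right]
  push_cast
  field_simp
  ring

theorem choose_sq_mul_mC_mul_mC (r k : ℕ) (hk : k + 1 < r) (I : ℕ → ℕ)
    (hI : ∀ i < r, 1 ≤ I i) :
    (((∑ i ∈ range r, I i) - 1).choose (∑ i ∈ range (k + 1), I i) : ℚ) ^ 2 *
        ((∑ i ∈ range (k + 1), I i : ℕ) : ℚ) * mC (k + 1) I *
        mC (r - (k + 1)) (fun i => I (i + (k + 1)))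
      = -((∑ i ∈ Ico (k + 1) r, (I i : ℚ)) * (I k + I (k + 1)) / ∑ i ∈ range r, (I i : ℚ))
          * mC r I := by
  obtain ⟨b, rfl⟩ : ∃ b, r = k + 1 + (b + 1) := ⟨r - (k + 2), by omega⟩
  rw [Nat.add_sub_cancel_left]
  have hmul := mC_mul_mC_shift k b I (by have := hI k (by omega); omega)
  have hIco : ∑ i ∈ Ico (k + 1) (k + 1 + (b + 1)), (I i : ℚ)
      = ((∑ i ∈ range (b + 1), I (i + (k + 1)) : ℕ) : ℚ) := by
    rw [sum_Ico_eq_sum_range, Nat.add_sub_cancel_left]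
    push_cast
    exact sum_congr rfl fun i _ => by rw [add_comm i]
  rw [hIco, ← Nat.cast_sum]
  set A := ∑ i ∈ range (k + 1), I i
  set B := ∑ i ∈ range (b + 1), I (i + (k + 1))
  have hsplit : ∑ i ∈ range (k + 1 + (b + 1)), I i = A + B := sum_range_add_shift _ _ _
  have hA : 0 < A := lt_of_lt_of_le (hI 0 (by omega)) (single_le_sum (by simp) (by simp))
  have hchoose :
      ((A + B - 1).choose A : ℚ) ^ 2 * A * factorialWeight A * factorialWeight B * (A + B)
        = B * factorialWeight (A + B) := by
    exact_mod_cast choose_sq_mul_factorialWeight A B hA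
  have hW : (factorialWeight (A + B) : ℚ) ≠ 0 := by exact_mod_cast (factorialWeight_pos _).ne'
  have hAB : (A + B : ℚ) ≠ 0 := by positivity
  rw [hsplit] at hmul ⊢
  push_cast
  field_simp
  apply mul_right_cancel₀ hW
  linear_combination (((A + B - 1).choose A : ℚ) ^ 2 * A * (A + B)) * hmul
    - ((I k + I (k + 1)) * mC (k + 1 + (b + 1)) I) * hchoose

/-- the partial-sum identity and the resulting quadratic relation
(comb-first) among the coefficients `m_I`. -/
theorem partial_sum_and_quadratic_relation (r N : ℕ) (hr : 1 ≤ r) (I : ℕ → ℕ)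
    (hI : ∀ i < r, 1 ≤ I i) (hN : N = ∑ i ∈ Finset.range r, I i) :
    ((∑ k ∈ Finset.range (r - 1), (∑ i ∈ Finset.Ico (k + 1) r, I i) * (I k + I (k + 1)))
        = (∑ i ∈ Finset.range r, I i) * (∑ i ∈ Finset.Ico 1 r, I i)) ∧
    (-((N : ℚ) - (I 0 : ℚ)) * mC r I
        = ∑ k ∈ Finset.range (r - 1),
            (((N - 1).choose (∑ i ∈ Finset.range (k + 1), I i) : ℚ)) ^ 2 *
              ((∑ i ∈ Finset.range (k + 1), I i : ℕ) : ℚ) *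
              mC (k + 1) I * mC (r - (k + 1)) (fun i => I (i + (k + 1)))) := by
  obtain ⟨m, rfl⟩ : ∃ m, r = m + 1 := ⟨r - 1, by omega⟩
  rw [Nat.add_sub_cancel]
  refine ⟨sum_range_sum_Ico_mul_add_succ I m, ?_⟩
  subst hN
  rw [sum_congr rfl fun k hk => choose_sq_mul_mC_mul_mC (m + 1) k (by simp at hk; omega) I hI,
    ← sum_mul, sum_neg_distrib, ← sum_div,
    sum_range_sum_Ico_mul_add_succ (fun i => (I i : ℚ)) m]
  have hN0 : (∑ i ∈ range (m + 1), (I i : ℚ)) ≠ 0 :=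
    (sum_pos (fun i hi => by have := hI i (by simpa using hi); positivity) (by simp)).ne'
  have hhead := sum_range_eq_add_Ico (fun i => (I i : ℚ)) (show 0 < m + 1 by omega)
  push_cast
  rw [mul_div_cancel_left₀ _ hN0, hhead]
  ring
end

section
/- Let a ≥ 1 and N be integers, let J be a composition with |J| = a and K = (K_1, ..., K_s) a composition with |K| = N - a, and for a composition I = (I_1, ..., I_r) let n_I = (|I|-1)!² ∏_j 1/(I_j-1)!² · ∏_{j=1}^{r-1} 1/((∑_{k≤j} I_k)(∑_{k>j} I_k)). Then ((a+K_1)(a+K_1+K_2)···(a+K_1+···+K_{s-1}))/(K_1(K_1+K_2)···(K_1+···+K_{s-1})) · n_{(J,K)} = n_{(J, N-a)} · n_K, where (J,K) denotes concatenation and (J, N-a) denotes J with the single entry N-a appended. -/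
open Finset

section Aux

private lemma key_lemma' (a b c : ℕ) (hb : 1 ≤ b) (hc : 1 ≤ c) :
    ((a + b : ℕ) : ℚ) / (b : ℚ) * ((a + b + c - 1).choose (c - 1) : ℚ) *
      ((a + b - 1).choose a : ℚ)
    = ((a + b + c - 1).choose a : ℚ) * ((b + c - 1).choose (c - 1) : ℚ) := by
  obtain ⟨b', rfl⟩ : ∃ b', b = b' + 1 := ⟨b - 1, by omega⟩
  obtain ⟨c', rfl⟩ : ∃ c', c = c' + 1 := ⟨c - 1, by omega⟩
  have e1 : a + (b' + 1) + (c' + 1) - 1 = a + b' + c' + 1 := by omega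
  have e2 : (c' + 1) - 1 = c' := by omega
  have e3 : a + (b' + 1) - 1 = a + b' := by omega
  have e4 : (b' + 1) + (c' + 1) - 1 = b' + c' + 1 := by omega
  rw [e1, e2, e3, e4]
  rw [Nat.cast_choose ℚ (show c' ≤ a + b' + c' + 1 by omega),
    Nat.cast_choose ℚ (show a ≤ a + b' by omega),
    Nat.cast_choose ℚ (show a ≤ a + b' + c' + 1 by omega),
    Nat.cast_choose ℚ (show c' ≤ b' + c' + 1 by omega)]
  have s1 : a + b' + c' + 1 - c' = a + b' + 1 := by omega
  have s2 : a + b' - a = b' := by omega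
  have s3 : a + b' + c' + 1 - a = b' + c' + 1 := by omega
  have s4 : b' + c' + 1 - c' = b' + 1 := by omega
  rw [s1, s2, s3, s4, Nat.factorial_succ (a + b'), Nat.factorial_succ (b' + c'),
    Nat.factorial_succ b']
  have h1 : ((a + b').factorial : ℚ) ≠ 0 := Nat.cast_ne_zero.mpr (Nat.factorial_ne_zero _)
  have h2 : ((b' + c').factorial : ℚ) ≠ 0 := Nat.cast_ne_zero.mpr (Nat.factorial_ne_zero _)
  have h3 : ((a).factorial : ℚ) ≠ 0 := Nat.cast_ne_zero.mpr (Nat.factorial_ne_zero _)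
  have h4 : ((b').factorial : ℚ) ≠ 0 := Nat.cast_ne_zero.mpr (Nat.factorial_ne_zero _)
  have h5 : ((c').factorial : ℚ) ≠ 0 := Nat.cast_ne_zero.mpr (Nat.factorial_ne_zero _)
  have h6 : ((b' : ℚ) + 1) ≠ 0 := by positivity
  push_cast
  field_simp
  ring

private lemma core_lemma' (a : ℕ) (ha : 1 ≤ a) :
    ∀ s : ℕ, ∀ K : ℕ → ℕ, 1 ≤ s → (∀ i < s, 1 ≤ K i) →
      (∏ i ∈ Finset.range (s - 1),
          (((a + ∑ k ∈ Finset.range (i + 1), K k : ℕ) : ℚ) /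
            ((∑ k ∈ Finset.range (i + 1), K k : ℕ) : ℚ))) *
        ∏ j ∈ Finset.range s, ((a + ∑ k ∈ Finset.range (j + 1), K k - 1).choose (K j - 1) : ℚ)
      = ((a + ∑ k ∈ Finset.range s, K k - 1).choose a : ℚ) *
        ∏ j ∈ Finset.range s, (((∑ k ∈ Finset.range (j + 1), K k) - 1).choose (K j - 1) : ℚ) := by
  intro s
  induction s with
  | zero => intro K h; omega
  | succ s ih =>
    intro K _ hK
    rcases Nat.eq_zero_or_pos s with rfl | hs
    · simp only [Finset.prod_range_one, Finset.sum_range_one, zero_add, Nat.sub_self,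
        Finset.range_zero, Finset.prod_empty, one_mul]
      have h1 : 1 ≤ K 0 := hK 0 (by omega)
      have : (a + K 0 - 1).choose (K 0 - 1) = (a + K 0 - 1).choose a :=
        Nat.choose_symm_of_eq_add (by omega)
      rw [this, Nat.choose_self]; norm_num
    · have hK' : ∀ i < s, 1 ≤ K i := fun i hi => hK i (by omega)
      have IH := ih K hs hK'
      have hb : 1 ≤ ∑ k ∈ Finset.range s, K k :=
        le_trans (hK 0 (by omega)) (Finset.single_le_sum (fun i _ => Nat.zero_le _)
          (Finset.mem_range.mpr hs))
      have hc : 1 ≤ K s := hK s (by omega)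
      have hs1 : s - 1 + 1 = s := by omega
      have keyeq := key_lemma' a (∑ k ∈ Finset.range s, K k) (K s) hb hc
      rw [Nat.add_sub_cancel, show s = (s - 1) + 1 by omega, Finset.prod_range_succ, hs1,
        Finset.prod_range_succ, Finset.prod_range_succ
          (fun j => (((∑ k ∈ Finset.range (j + 1), K k) - 1).choose (K j - 1) : ℚ)),
        Finset.sum_range_succ K s,
        show a + (∑ k ∈ Finset.range s, K k + K s) = a + ∑ k ∈ Finset.range s, K k + K s
          from (add_assoc _ _ _).symm]
      push_cast at keyeq IH ⊢
      linear_combination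
        ((↑a + ∑ k ∈ Finset.range s, (K k : ℚ)) / (∑ k ∈ Finset.range s, (K k : ℚ)) *
          ((a + ∑ k ∈ Finset.range s, K k + K s - 1).choose (K s - 1) : ℚ)) * IH +
        (∏ j ∈ Finset.range s, (((∑ k ∈ Finset.range (j + 1), K k) - 1).choose (K j - 1) : ℚ)) * keyeq

private lemma prod_append' (r s : ℕ) (J K : ℕ → ℕ) :
    (∏ j ∈ Finset.range (r + s),
      ((((∑ k ∈ Finset.range (j + 1), (fun i => if i < r then J i else K (i - r)) k) - 1).choose
          ((if j < r then J j else K (j - r)) - 1) : ℚ) *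
        (((∑ k ∈ Finset.Ico j (r + s), (fun i => if i < r then J i else K (i - r)) k) - 1).choose
          ((if j < r then J j else K (j - r)) - 1) : ℚ)))
    = (∏ j ∈ Finset.range r,
        ((((∑ k ∈ Finset.range (j + 1), J k) - 1).choose (J j - 1) : ℚ) *
          ((((∑ k ∈ Finset.Ico j r, J k) + ∑ k ∈ Finset.range s, K k) - 1).choose (J j - 1) : ℚ))) *
      (∏ j ∈ Finset.range s,
        ((((∑ k ∈ Finset.range r, J k) + ∑ k ∈ Finset.range (j + 1), K k - 1).choose (K j - 1) : ℚ) *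
          (((∑ k ∈ Finset.Ico j s, K k) - 1).choose (K j - 1) : ℚ))) := by
  rw [Finset.prod_range_add]
  congr 1
  · refine Finset.prod_congr rfl fun j hj => ?_
    rw [Finset.mem_range] at hj
    have h1 : ∑ k ∈ Finset.range (j + 1), (fun i => if i < r then J i else K (i - r)) k
        = ∑ k ∈ Finset.range (j + 1), J k :=
      Finset.sum_congr rfl fun k hk => if_pos (by rw [Finset.mem_range] at hk; omega)
    have h2 : ∑ k ∈ Finset.Ico j (r + s), (fun i => if i < r then J i else K (i - r)) k
        = (∑ k ∈ Finset.Ico j r, J k) + ∑ k ∈ Finset.range s, K k := by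
      rw [← Finset.sum_Ico_consecutive _ (le_of_lt hj) (Nat.le_add_right r s)]
      congr 1
      · exact Finset.sum_congr rfl fun k hk => if_pos (by rw [Finset.mem_Ico] at hk; omega)
      · rw [Finset.sum_Ico_eq_sum_range]
        simp only [Nat.add_sub_cancel_left]
        exact Finset.sum_congr rfl fun k _ => by
          rw [if_neg (by omega : ¬ r + k < r)]
    rw [h1, h2, if_pos hj]
  · refine Finset.prod_congr rfl fun j hj => ?_
    rw [Finset.mem_range] at hj
    have h1 : ∑ k ∈ Finset.range (r + j + 1), (fun i => if i < r then J i else K (i - r)) k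
        = (∑ k ∈ Finset.range r, J k) + ∑ k ∈ Finset.range (j + 1), K k := by
      rw [show r + j + 1 = r + (j + 1) from rfl, Finset.sum_range_add]
      congr 1
      · exact Finset.sum_congr rfl fun k hk => if_pos (by rw [Finset.mem_range] at hk; omega)
      · exact Finset.sum_congr rfl fun k _ => by
          rw [if_neg (by omega : ¬ r + k < r), Nat.add_sub_cancel_left]
    have h2 : ∑ k ∈ Finset.Ico (r + j) (r + s), (fun i => if i < r then J i else K (i - r)) k
        = ∑ k ∈ Finset.Ico j s, K k := by
      rw [Finset.sum_Ico_eq_sum_range, Finset.sum_Ico_eq_sum_range]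
      rw [show r + s - (r + j) = s - j by omega]
      exact Finset.sum_congr rfl fun k _ => by
        rw [if_neg (by omega : ¬ r + j + k < r), show r + j + k - r = j + k by omega]
    rw [h1, h2, if_neg (by omega : ¬ r + j < r), show r + j - r = j by omega]

end Aux

/-- the identity (c-reduced) relating `n_{(J,K)}`, `n_{(J,N-a)}` and
`n_K`, for compositions `J` of size `a` and `K` of size `N - a`. -/
theorem nC_concat_identity (rJ s a N : ℕ) (hrJ : 1 ≤ rJ) (hs : 1 ≤ s)
    (J K : ℕ → ℕ) (hJ : ∀ i < rJ, 1 ≤ J i) (hK : ∀ i < s, 1 ≤ K i)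
    (ha : a = ∑ i ∈ Finset.range rJ, J i)
    (hN : N = a + ∑ i ∈ Finset.range s, K i) :
    (∏ i ∈ Finset.range (s - 1),
        (((a + ∑ k ∈ Finset.range (i + 1), K k : ℕ) : ℚ) /
          ((∑ k ∈ Finset.range (i + 1), K k : ℕ) : ℚ))) *
      nC (rJ + s) (fun i => if i < rJ then J i else K (i - rJ))
    = nC (rJ + 1) (fun i => if i < rJ then J i else N - a) * nC s K := by
  have ha1 : 1 ≤ a := ha ▸ le_trans (hJ 0 hrJ)
    (Finset.single_le_sum (fun i _ => Nat.zero_le _) (Finset.mem_range.mpr hrJ))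
  have hsum : N - a = ∑ k ∈ Finset.range s, K k := by omega
  unfold nC
  rw [prod_append' rJ s J K, prod_append' rJ 1 J (fun _ => N - a)]
  simp only [zero_add, Finset.sum_range_one, Finset.prod_range_one,
    Nat.Ico_zero_eq_range, hsum, ← ha, Nat.choose_self, Nat.cast_one, mul_one]
  have hb : 1 ≤ ∑ k ∈ Finset.range s, K k :=
    le_trans (hK 0 hs) (Finset.single_le_sum (fun i _ => Nat.zero_le _)
      (Finset.mem_range.mpr hs))
  have hQ2 : (a + (∑ k ∈ Finset.range s, K k) - 1).choose ((∑ k ∈ Finset.range s, K k) - 1)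
      = (a + (∑ k ∈ Finset.range s, K k) - 1).choose a :=
    Nat.choose_symm_of_eq_add (by omega)
  have core := core_lemma' a ha1 s K hs hK
  rw [hQ2]
  simp only [Finset.prod_mul_distrib]
  push_cast at core ⊢
  linear_combination
    ((∏ j ∈ Finset.range rJ, (((∑ k ∈ Finset.range (j + 1), J k) - 1).choose (J j - 1) : ℚ)) *
     (∏ j ∈ Finset.range rJ,
        ((((∑ k ∈ Finset.Ico j rJ, J k) + ∑ k ∈ Finset.range s, K k) - 1).choose (J j - 1) : ℚ)) *
     (∏ j ∈ Finset.range s, (((∑ k ∈ Finset.Ico j s, K k) - 1).choose (K j - 1) : ℚ))) * core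
end

section
/- Let P be a trace-class symmetric endomorphism (or an n×n symmetric matrix) and define w(r) = det(1 - (r²/2)P)^{1/2} as a formal power series in r. Then -( w''(r) - (n-1) r^{-1} w'(r) )/w(r), expanded as a power series in r²/2, equals -(1/2) ∑_{N ≥ 1} ( ∑_{a=1}^{N-1} tr(P^a) tr(P^{N-a}) ) (r²/2)^{N-1} + ∑_{N ≥ 1} ((2N - n)/2) tr(P^N) (r²/2)^{N-1}. In particular, the coefficient of (r²/4)^{N-1}/(N-1)!² is -(N-1)!² 2^{N-1} [ (n/2 - N) tr(P^N) + (1/2) ∑_{a=1}^{N-1} tr(P^a) tr(P^{N-a}) ]. -/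
/-!
With `τ(Y) = ∑ tr(Pᵏ⁺¹) Yᵏ = tr(P (1 - Y P)⁻¹)`, Jacobi's formula and the explicit geometric
inverse of `1 - Y P` give `d/dY det(1 - Y P) = -τ det(1 - Y P)`. Substituting `Y = r²/2` and
halving the logarithmic derivative of `w² = det(1 - (r²/2) P)` yields `2 w' = -r τ(r²/2) w`.
Differentiating once more expresses `-(w'' - (n-1) r⁻¹ w') / w` as `σ(r²/2)` with
`σ = (1 - n/2) τ + Y τ' - Y τ² / 2`, and the coefficients of `σ` are those of `Sser n P`
(the convolution `∑ τᵢ τⱼ` over `i + j = k - 1` is the sum over `a` of `tr(Pᵃ) tr(P^(k+1-a))`).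
-/

open Finset

/-- Formal derivative `d/dr` of a power series. -/
noncomputable def dX (f : PowerSeries ℚ) : PowerSeries ℚ :=
  PowerSeries.mk fun n => ((n : ℚ) + 1) * (PowerSeries.coeff (R := ℚ) (n + 1)) f

/-- The power series
`-(1/2)∑_{N≥1}(∑_{a=1}^{N-1} tr(Pᵃ)tr(P^{N-a}))(r²/2)^{N-1} + ∑_{N≥1}((2N-n)/2)tr(Pᴺ)(r²/2)^{N-1}`. -/
noncomputable def Sser (n : ℕ) (P : Matrix (Fin n) (Fin n) ℚ) : PowerSeries ℚ :=
  PowerSeries.mk fun k =>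
    if k % 2 = 0 then
      (1 / 2 : ℚ) ^ (k / 2) *
        (-(1 / 2) * (∑ a ∈ Finset.Icc 1 (k / 2),
            Matrix.trace (P ^ a) * Matrix.trace (P ^ (k / 2 + 1 - a)))
          + ((2 * ((k / 2 : ℕ) : ℚ) + 2 - (n : ℚ)) / 2) * Matrix.trace (P ^ (k / 2 + 1)))
    else 0

open Matrix PowerSeries

theorem Finset.Nat.sum_antidiagonal_succ_eq_sum_Icc {M : Type*} [AddCommMonoid M]
    (f : ℕ → ℕ → M) (k : ℕ) :
    ∑ p ∈ antidiagonal k, f (p.1 + 1) (p.2 + 1) = ∑ a ∈ Icc 1 (k + 1), f a (k + 2 - a) := by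
  rw [Nat.sum_antidiagonal_eq_sum_range_succ (fun i j => f (i + 1) (j + 1)),
    ← Ico_add_one_right_eq_Icc, sum_Ico_eq_sum_range, Nat.add_sub_cancel]
  refine sum_congr rfl fun a ha => ?_
  rw [mem_range] at ha
  rw [add_comm 1 a, show k + 2 - (a + 1) = k - a + 1 by omega]

namespace Derivation

variable {R A : Type*} [CommRing R] [CommRing A] [Algebra R A] (D : Derivation R A A)

theorem leibniz_finset_prod {ι : Type*} [DecidableEq ι] (s : Finset ι) (f : ι → A) :
    D (∏ i ∈ s, f i) = ∑ i ∈ s, (∏ j ∈ s.erase i, f j) * D (f i) := by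
  induction s using Finset.induction_on with
  | empty => simp
  | insert a s ha ih =>
    rw [prod_insert ha, leibniz, ih, sum_insert ha, erase_insert ha, smul_eq_mul, smul_eq_mul,
      mul_sum, add_comm]
    congr 1
    refine sum_congr rfl fun i hi => ?_
    rw [erase_insert_of_ne (ne_of_mem_of_not_mem hi ha).symm, prod_insert (by simp [ha])]
    ring

variable {ι : Type*} [Fintype ι] [DecidableEq ι]

theorem map_det_eq_sum_det_updateCol (M : Matrix ι ι A) :
    D M.det = ∑ j, (M.updateCol j fun i => D (M i j)).det := by
  simp only [det_apply, map_sum, Units.smul_def, map_zsmul, leibniz_finset_prod]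
  rw [sum_comm]
  refine sum_congr rfl fun σ _ => ?_
  rw [smul_sum]
  refine sum_congr rfl fun j _ => ?_
  rw [← mul_prod_erase univ _ (mem_univ j), updateCol_self, mul_comm]
  congr 2
  exact prod_congr rfl fun i hi => by rw [updateCol_ne (ne_of_mem_erase hi)]

theorem map_det (M : Matrix ι ι A) : D M.det = trace (M.adjugate * M.map D) := by
  simp only [map_det_eq_sum_det_updateCol, ← cramer_apply, cramer_eq_adjugate_mulVec, trace,
    diag_apply, mul_apply, mulVec, dotProduct, map_apply]

end Derivation

namespace PowerSeries

variable {R : Type*} [CommRing R]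

theorem hasSubst_C_mul_X_pow (c : R) {k : ℕ} (hk : k ≠ 0) : HasSubst (C c * X ^ k : R⟦X⟧) :=
  HasSubst.of_constantCoeff_zero' (by simp [hk])

theorem coeff_subst_C_mul_X_pow (c : R) {k : ℕ} (hk : k ≠ 0) (f : R⟦X⟧) (m : ℕ) :
    coeff m (f.subst (C c * X ^ k)) = if k ∣ m then c ^ (m / k) * coeff (m / k) f else 0 := by
  have hcX : (c • X : R⟦X⟧).subst (X ^ k : R⟦X⟧) = C c * X ^ k := by
    rw [subst_smul (HasSubst.X_pow hk), subst_X (HasSubst.X_pow hk), smul_eq_C_mul]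
  rw [← hcX, ← subst_comp_subst_apply (HasSubst.smul_X' c) (HasSubst.X_pow hk),
    ← rescale_eq_subst, coeff_subst_X_pow hk, coeff_rescale, Algebra.algebraMap_self,
    RingHom.id_apply]

theorem subst_C_mul {a : R⟦X⟧} (ha : HasSubst a) (r : R) (f : R⟦X⟧) :
    (C r * f).subst a = C r * f.subst a := by
  rw [subst_mul ha, subst_C]
  rfl

theorem coeff_X_mul_derivative (f : R⟦X⟧) (k : ℕ) : coeff k (X * d⁄dX R f) = k * coeff k f := by
  rcases k with _ | k
  · simp
  · rw [coeff_succ_X_mul, coeff_derivative, mul_comm]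
    push_cast
    rfl

end PowerSeries

namespace Matrix

variable {R : Type*} [CommRing R] {ι : Type*} [Fintype ι] [DecidableEq ι] (A : Matrix ι ι R)

noncomputable def geomSeries : Matrix ι ι R⟦X⟧ :=
  of fun i j => mk fun k => (A ^ k) i j

noncomputable def powTraceSeries : R⟦X⟧ :=
  mk fun k => trace (A ^ (k + 1))

theorem geomSeries_mul_map_C :
    A.geomSeries * A.map C = of fun i j => mk fun k => (A ^ (k + 1)) i j := by
  ext i j k
  simp [geomSeries, mul_apply, map_sum, pow_succ, coeff_mul_C]

theorem geomSeries_mul_one_sub_X_smul : A.geomSeries * (1 - (X : R⟦X⟧) • A.map C) = 1 := by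
  rw [Matrix.mul_sub, Matrix.mul_one, Matrix.mul_smul, geomSeries_mul_map_C]
  ext i j k
  rcases k with _ | k <;> by_cases hij : i = j <;>
    simp [geomSeries, one_apply, hij, coeff_succ_X_mul]

theorem adjugate_one_sub_X_smul :
    (1 - (X : R⟦X⟧) • A.map C).adjugate = (1 - (X : R⟦X⟧) • A.map C).det • A.geomSeries := by
  set M := 1 - (X : R⟦X⟧) • A.map C
  calc M.adjugate = A.geomSeries * M * M.adjugate := by
        rw [geomSeries_mul_one_sub_X_smul, Matrix.one_mul]
    _ = M.det • A.geomSeries := by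
        rw [Matrix.mul_assoc, mul_adjugate, Matrix.mul_smul, Matrix.mul_one]

theorem derivative_det_one_sub_X_smul :
    d⁄dX R (1 - (X : R⟦X⟧) • A.map C).det =
      -((1 - (X : R⟦X⟧) • A.map C).det * A.powTraceSeries) := by
  have hD : (1 - (X : R⟦X⟧) • A.map C).map (d⁄dX R) = -A.map C := by
    ext i j : 1
    simp [one_apply, apply_ite]
  rw [Derivation.map_det, hD, adjugate_one_sub_X_smul, Matrix.mul_neg, Matrix.smul_mul,
    trace_neg, trace_smul, geomSeries_mul_map_C, smul_eq_mul]
  congr 2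
  ext k
  simp [trace, powTraceSeries, map_sum]

theorem subst_det_one_sub_X_smul {a : R⟦X⟧} (ha : HasSubst a) :
    (1 - (X : R⟦X⟧) • A.map C).det.subst a = (1 - a • A.map C).det := by
  rw [← coe_substAlgHom ha, AlgHom.map_det]
  congr 1
  ext i j : 1
  by_cases hij : i = j <;> simp [hij, substAlgHom_X ha, C_eq_algebraMap]

theorem derivative_det_one_sub_smul {a : R⟦X⟧} (ha : HasSubst a) :
    d⁄dX R (1 - a • A.map C).det =
      -((1 - a • A.map C).det * A.powTraceSeries.subst a * d⁄dX R a) := by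
  rw [← subst_det_one_sub_X_smul A ha, derivative_subst ha, derivative_det_one_sub_X_smul,
    ← coe_substAlgHom ha, map_neg, map_mul, neg_mul]

theorem two_mul_derivative_of_sq_eq_det [IsDomain R] {a w : R⟦X⟧} (ha : HasSubst a) (hw0 : w ≠ 0)
    (hw : w ^ 2 = (1 - a • A.map C).det) :
    2 * d⁄dX R w = -(d⁄dX R a * A.powTraceSeries.subst a * w) := by
  have hdet := derivative_det_one_sub_smul A ha
  rw [← hw, derivative_pow] at hdet
  refine mul_left_cancel₀ hw0 ?_
  linear_combination hdet

end Matrix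

theorem dX_eq_derivative (f : ℚ⟦X⟧) : dX f = d⁄dX ℚ f := by
  ext n
  rw [dX, coeff_mk, coeff_derivative, mul_comm]

theorem C_half_mul_two : C (1 / 2 : ℚ) * 2 = 1 := by
  rw [← map_ofNat C 2, ← map_mul]
  norm_num

theorem derivative_C_half_mul_X_sq : d⁄dX ℚ (C (1 / 2 : ℚ) * X ^ 2) = X := by
  simp only [Derivation.leibniz, derivative_C, derivative_pow, derivative_X, smul_eq_mul]
  linear_combination X * C_half_mul_two

/-- If `w'(r) = -(r/2) τ(r²/2) w(r)`, then `-(w'' - (c - 1) r⁻¹ w') / w` is this series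
evaluated at `r²/2`. -/
noncomputable def radialSeries (c : ℚ) (τ : ℚ⟦X⟧) : ℚ⟦X⟧ :=
  C (1 - c / 2) * τ + X * d⁄dX ℚ τ - C (1 / 2 : ℚ) * (X * τ ^ 2)

theorem radialSeries_subst_mul (c : ℚ) (τ w : ℚ⟦X⟧)
    (hw : 2 * d⁄dX ℚ w = -(X * τ.subst (C (1 / 2 : ℚ) * X ^ 2) * w)) :
    -(X * d⁄dX ℚ (d⁄dX ℚ w) - C (c - 1) * d⁄dX ℚ w) =
      (radialSeries c τ).subst (C (1 / 2 : ℚ) * X ^ 2) * w * X := by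
  have hy := hasSubst_C_mul_X_pow (1 / 2 : ℚ) two_ne_zero
  set y : ℚ⟦X⟧ := C (1 / 2 : ℚ) * X ^ 2
  set T : ℚ⟦X⟧ := τ.subst y
  set U : ℚ⟦X⟧ := (d⁄dX ℚ τ).subst y
  have hdT : d⁄dX ℚ T = U * X := by
    rw [derivative_subst hy, derivative_C_half_mul_X_sq]
  have hw2 : 2 * d⁄dX ℚ (d⁄dX ℚ w) = -(T * w + X * (U * X) * w + X * T * d⁄dX ℚ w) := by
    have h := congrArg (d⁄dX ℚ) hw
    rw [← Nat.cast_ofNat] at h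
    simp only [Derivation.leibniz, Derivation.map_natCast, map_neg, derivative_X, hdT,
      smul_eq_mul] at h
    linear_combination h
  have hσ : (radialSeries c τ).subst y =
      (1 - C (1 / 2 : ℚ) * C c) * T + y * U - C (1 / 2 : ℚ) * y * T ^ 2 := by
    simp only [radialSeries, subst_sub hy, subst_add hy, subst_C_mul hy, subst_mul hy,
      subst_pow hy, subst_X hy]
    rw [← map_mul, ← map_one C, ← map_sub, show (1 : ℚ) - 1 / 2 * c = 1 - c / 2 by ring]
    ring
  rw [hσ, map_sub, map_one]
  -- `ring` treats `C (1 / 2)` as an atom, so every halving is paid for with `C_half_mul_two`.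
  linear_combination (C (1 / 2 : ℚ) * (C c - 1 + C (1 / 2 : ℚ) * X ^ 2 * T)) * hw
    - C (1 / 2 : ℚ) * X * hw2
    + (X * d⁄dX ℚ (d⁄dX ℚ w) - (C c - 1 + C (1 / 2 : ℚ) * X ^ 2 * T) * d⁄dX ℚ w + X * T * w)
      * C_half_mul_two

theorem coeff_radialSeries_powTraceSeries (n : ℕ) (P : Matrix (Fin n) (Fin n) ℚ) (k : ℕ) :
    coeff k (radialSeries n P.powTraceSeries) =
      -(1 / 2) * (∑ a ∈ Icc 1 k, trace (P ^ a) * trace (P ^ (k + 1 - a)))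
        + ((2 * (k : ℚ) + 2 - n) / 2) * trace (P ^ (k + 1)) := by
  rw [radialSeries, map_sub, map_add, coeff_C_mul, coeff_X_mul_derivative, coeff_C_mul]
  rcases k with _ | k
  · simp [powTraceSeries, sub_div]
  · rw [coeff_succ_X_mul, sq, coeff_mul, show k + 1 + 1 = k + 2 by rfl,
      ← Nat.sum_antidiagonal_succ_eq_sum_Icc (fun a b => trace (P ^ a) * trace (P ^ b))]
    simp only [powTraceSeries, coeff_mk]
    push_cast
    ring

theorem Sser_eq_subst (n : ℕ) (P : Matrix (Fin n) (Fin n) ℚ) :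
    Sser n P = (radialSeries n P.powTraceSeries).subst (C (1 / 2 : ℚ) * X ^ 2) := by
  ext m
  rw [coeff_subst_C_mul_X_pow _ two_ne_zero, coeff_radialSeries_powTraceSeries, Sser, coeff_mk]
  simp only [Nat.dvd_iff_mod_eq_zero]

theorem coeff_Sser_two_mul (n : ℕ) (P : Matrix (Fin n) (Fin n) ℚ) (k : ℕ) :
    coeff (2 * k) (Sser n P) = (1 / 2 : ℚ) ^ k *
      (-(1 / 2) * (∑ a ∈ Icc 1 k, trace (P ^ a) * trace (P ^ (k + 1 - a)))
        + ((2 * (k : ℚ) + 2 - n) / 2) * trace (P ^ (k + 1))) := by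
  simp [Sser]

theorem trace_zeroth_order_identity_general (n : ℕ) (P : Matrix (Fin n) (Fin n) ℚ)
    (w : PowerSeries ℚ) (hw0 : PowerSeries.constantCoeff (R := ℚ) w = 1)
    (hw : w ^ 2 = Matrix.det
      ((1 : Matrix (Fin n) (Fin n) (PowerSeries ℚ)) -
        (PowerSeries.C (R := ℚ) (1 / 2) * PowerSeries.X ^ 2) • P.map (PowerSeries.C (R := ℚ)))) :
    (-(PowerSeries.X * dX (dX w) - PowerSeries.C (R := ℚ) ((n : ℚ) - 1) * dX w)
        = Sser n P * w * PowerSeries.X) ∧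
    (∀ N : ℕ, 1 ≤ N →
      (4 : ℚ) ^ (N - 1) * ((N - 1).factorial : ℚ) ^ 2 *
          (PowerSeries.coeff (R := ℚ) (2 * (N - 1))) (Sser n P)
        = -((N - 1).factorial : ℚ) ^ 2 * 2 ^ (N - 1) *
            (((n : ℚ) / 2 - (N : ℚ)) * Matrix.trace (P ^ N) +
              (1 / 2) * ∑ a ∈ Finset.Icc 1 (N - 1),
                Matrix.trace (P ^ a) * Matrix.trace (P ^ (N - a)))) := by
  refine ⟨?_, fun N hN => ?_⟩
  · have hw_ne : w ≠ 0 := by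
      rintro rfl
      simp at hw0
    have hw1 := P.two_mul_derivative_of_sq_eq_det (hasSubst_C_mul_X_pow _ two_ne_zero) hw_ne hw
    rw [derivative_C_half_mul_X_sq] at hw1
    rw [dX_eq_derivative, dX_eq_derivative, Sser_eq_subst]
    exact radialSeries_subst_mul n _ w hw1
  · obtain ⟨k, rfl⟩ := Nat.exists_eq_add_of_le' hN
    rw [Nat.add_sub_cancel, coeff_Sser_two_mul]
    have h4 : (4 : ℚ) ^ k * (1 / 2) ^ k = 2 ^ k := by
      rw [← mul_pow]
      norm_num
    push_cast
    linear_combination ((k.factorial : ℚ) ^ 2 *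
      (-(1 / 2) * (∑ a ∈ Icc 1 k, trace (P ^ a) * trace (P ^ (k + 1 - a)))
        + ((2 * (k : ℚ) + 2 - n) / 2) * trace (P ^ (k + 1)))) * h4

/-- for `w(r) = det(1 - (r²/2)P)^{1/2}` (encoded by `w² = det(1-(r²/2)P)`,
`w(0)=1`), the expression `-(w'' - (n-1)r⁻¹w')/w` equals the series `Sser n P`
(stated multiplied through by `w·r`), and in particular the coefficient of
`(r²/4)^{N-1}/(N-1)!²` equals
`-(N-1)!² 2^{N-1} [(n/2-N) tr(Pᴺ) + (1/2)∑_{a=1}^{N-1} tr(Pᵃ)tr(P^{N-a})]`. -/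
theorem trace_zeroth_order_identity (n : ℕ) (P : Matrix (Fin n) (Fin n) ℚ)
    (hP : P.IsSymm) (w : PowerSeries ℚ) (hw0 : PowerSeries.constantCoeff (R := ℚ) w = 1)
    (hw : w ^ 2 = Matrix.det
      ((1 : Matrix (Fin n) (Fin n) (PowerSeries ℚ)) -
        (PowerSeries.C (R := ℚ) (1 / 2) * PowerSeries.X ^ 2) • P.map (PowerSeries.C (R := ℚ)))) :
    (-(PowerSeries.X * dX (dX w) - PowerSeries.C (R := ℚ) ((n : ℚ) - 1) * dX w)
        = Sser n P * w * PowerSeries.X) ∧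
    (∀ N : ℕ, 1 ≤ N →
      (4 : ℚ) ^ (N - 1) * ((N - 1).factorial : ℚ) ^ 2 *
          (PowerSeries.coeff (R := ℚ) (2 * (N - 1))) (Sser n P)
        = -((N - 1).factorial : ℚ) ^ 2 * 2 ^ (N - 1) *
            (((n : ℚ) / 2 - (N : ℚ)) * Matrix.trace (P ^ N) +
              (1 / 2) * ∑ a ∈ Finset.Icc 1 (N - 1),
                Matrix.trace (P ^ a) * Matrix.trace (P ^ (N - a)))) :=
  trace_zeroth_order_identity_general n P w hw0 hw
end

section
/- For all integers N ≥ 1 and half-integer parameter m = n/2 treated as an indeterminate: ∑_{k=0}^{N-1} (2^k (N-1)!/(N-1-k)!)² · (N-k)!(N-k-1)! · C(m, k) · (-1)^k · 2^{-2k} · m(m-1) = -(-1)^N (m - N)(N-1)! N! C(m, N), where C(m,k) denotes the generalized binomial coefficient m(m-1)···(m-k+1)/k!. Equivalently: -∑_{k=0}^{N-1} (C(N-1,k) k!)² m(m-1)(N-k)!(N-k-1)! (-1)^k C(m,k) = (-1)^N (m-N)(N-1)! N! C(m,N). -/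
/-!
Write `N = M + 1`. The factorial weights collapse to `(M!)² (M + 1 - k)`, and a sum weighted by
`M + 1 - k` is the sum of the first `M + 1` partial sums. By Pascal's rule the alternating partial
sums of `C(m, k)` are `(-1)^j C(m - 1, j)`, so iterating twice gives `(-1)^M C(m - 2, M)`. Absorption,
`m C(m - 1, k) = (k + 1) C(m, k + 1)`, then turns `m (m - 1) C(m - 2, M)` into
`(M + 1) (m - M - 1) C(m, M + 1)`, which is the right-hand side.
-/

open Finset

def gchoose (m : ℚ) (k : ℕ) : ℚ :=
  (∏ i ∈ Finset.range k, (m - i)) / (k.factorial : ℚ)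

theorem Finset.sum_range_sum_range_succ {β : Type*} [AddCommMonoid β] (f : ℕ → β) (n : ℕ) :
    ∑ j ∈ range n, ∑ k ∈ range (j + 1), f k = ∑ k ∈ range n, (n - k) • f k := by
  induction n with
  | zero => simp
  | succ n ih =>
    have hweight : ∀ k ∈ range (n + 1), (n + 1 - k) • f k = (n - k) • f k + f k := by
      intro k hk
      rw [Nat.sub_add_comm (mem_range_succ_iff.mp hk), succ_nsmul]
    rw [sum_range_succ, ih, sum_congr rfl hweight, sum_add_distrib,
      sum_range_succ (fun k => (n - k) • f k), Nat.sub_self, zero_smul, add_zero]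

namespace Ring

variable {R : Type*}

section

variable [Ring R] [BinomialRing R]

theorem mul_choose_sub_one (r : R) (k : ℕ) :
    r * choose (r - 1) k = (k + 1) * choose r (k + 1) := by
  have h := choose_smul_choose r (Nat.le_add_left 1 k)
  rw [Nat.choose_one_right, choose_one_right, nsmul_eq_mul, Nat.add_sub_cancel] at h
  exact_mod_cast h.symm

theorem succ_mul_choose_succ (r : R) (k : ℕ) :
    (k + 1) * choose r (k + 1) = choose r k * (r - k) := by
  have h := choose_smul_choose r (Nat.le_succ k)
  rw [Nat.choose_succ_self_right, nsmul_eq_mul, Nat.succ_sub le_rfl, Nat.sub_self,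
    choose_one_right] at h
  exact_mod_cast h

theorem choose_sub_one_add_choose_sub_one (r : R) (k : ℕ) :
    choose (r - 1) k + choose (r - 1) (k + 1) = choose r (k + 1) := by
  simpa using (choose_succ_succ (r - 1) k).symm

theorem sum_range_succ_neg_one_pow_mul_choose (r : R) (n : ℕ) :
    ∑ k ∈ range (n + 1), (-1) ^ k * choose r k = (-1) ^ n * choose (r - 1) n := by
  induction n with
  | zero => simp
  | succ n ih =>
    rw [sum_range_succ, ih, ← choose_sub_one_add_choose_sub_one r n, pow_succ]
    noncomm_ring

theorem sum_range_succ_nsmul_neg_one_pow_mul_choose (r : R) (n : ℕ) :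
    ∑ k ∈ range (n + 1), (n + 1 - k) • ((-1) ^ k * choose r k) = (-1) ^ n * choose (r - 2) n := by
  rw [← sum_range_sum_range_succ]
  simp only [sum_range_succ_neg_one_pow_mul_choose]
  rw [sub_sub, one_add_one_eq_two]

end

theorem mul_sub_one_mul_choose_sub_two [CommRing R] [BinomialRing R] (r : R) (k : ℕ) :
    r * (r - 1) * choose (r - 2) k = (k + 1) * (r - (k + 1)) * choose r (k + 1) := by
  have habsorb₁ := mul_choose_sub_one (r - 1) k
  have habsorb₂ := mul_choose_sub_one r (k + 1)
  have hstep := succ_mul_choose_succ r (k + 1)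
  rw [sub_sub, one_add_one_eq_two] at habsorb₁
  push_cast at hstep habsorb₂
  linear_combination r * habsorb₁ + (k + 1) * habsorb₂ + (k + 1) * hstep

end Ring

theorem gchoose_eq_choose (m : ℚ) (k : ℕ) : gchoose m k = Ring.choose m k := by
  rw [gchoose, Ring.choose_eq_smul, ← Polynomial.aeval_eq_smeval, Polynomial.aeval_def,
    Polynomial.eval₂_eq_eval_map, descPochhammer_map,
    descPochhammer_eval_eq_prod_range, smul_eq_mul, div_eq_inv_mul]

theorem sq_mul_factorial_div_mul_factorial {M k : ℕ} (hk : k ≤ M) :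
    ((2 : ℚ) ^ k * M.factorial / (M - k).factorial) ^ 2 *
        ((M + 1 - k).factorial * (M - k).factorial) * (1 / 2 ^ (2 * k))
      = M.factorial ^ 2 * (M + 1 - k : ℕ) := by
  rw [Nat.sub_add_comm hk, Nat.factorial_succ]
  have : ((M - k).factorial : ℚ) ≠ 0 := by positivity
  push_cast
  field_simp
  ring

/-- the polynomial identity in `m = n/2` (sum-round) verifying the
zeroth-order-term recursion for the operators `M_{2N}` on the round sphere. -/
theorem sphere_sum_identity (N : ℕ) (hN : 1 ≤ N) (m : ℚ) :
    ∑ k ∈ Finset.range N,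
        ((2 : ℚ) ^ k * ((N - 1).factorial : ℚ) / ((N - 1 - k).factorial : ℚ)) ^ 2 *
          (((N - k).factorial : ℚ) * ((N - k - 1).factorial : ℚ)) *
          gchoose m k * (-1 : ℚ) ^ k * (1 / (2 : ℚ) ^ (2 * k)) * (m * (m - 1))
      = -(-1 : ℚ) ^ N * (m - N) * ((N - 1).factorial : ℚ) * (N.factorial : ℚ) *
          gchoose m N := by
  obtain ⟨M, rfl⟩ : ∃ M, N = M + 1 := ⟨N - 1, by omega⟩
  have hsummand : ∀ k ∈ range (M + 1),
      ((2 : ℚ) ^ k * (M + 1 - 1).factorial / (M + 1 - 1 - k).factorial) ^ 2 *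
          ((M + 1 - k).factorial * (M + 1 - k - 1).factorial) *
          gchoose m k * (-1) ^ k * (1 / 2 ^ (2 * k)) * (m * (m - 1))
        = M.factorial ^ 2 * (m * (m - 1)) * ((M + 1 - k) • ((-1) ^ k * Ring.choose m k)) := by
    intro k hk
    have hweight := sq_mul_factorial_div_mul_factorial (mem_range_succ_iff.mp hk)
    rw [Nat.sub_right_comm (M + 1) k 1, Nat.add_sub_cancel, nsmul_eq_mul, gchoose_eq_choose]
    linear_combination (m * (m - 1) * ((-1) ^ k * Ring.choose m k)) * hweight
  have hchoose := Ring.mul_sub_one_mul_choose_sub_two m M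
  rw [sum_congr rfl hsummand, ← mul_sum, Ring.sum_range_succ_nsmul_neg_one_pow_mul_choose,
    gchoose_eq_choose, Nat.add_sub_cancel, Nat.factorial_succ]
  push_cast
  linear_combination ((M.factorial : ℚ) ^ 2 * (-1) ^ M) * hchoose
end
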